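/- arXiv:nlin/0505019 — 5 statements merged into one kernel-verified Lean document; each statement's English description precedes it below -/
import Mathlib

section
/- With w_p(n) defined on a Fermat curve point p = (x,y) (x^N + y^N = 1) by w_p(0)=1 and w_p(n)/w_p(n-1) = y/(1-ω^n x), with Op = (ω^{-1}x^{-1}, ω^{-1/2}x^{-1}y) and Φ(n) = (-1)^n ω^{n²/2}, the inversion identity w_p(n) = 1/(w_{Op}(-n) Φ(n)), where w_{Op}(-n) is interpreted via N-periodicity as w_{Op}(N-n), holds for all 0 ≤ n < N. -/
open Finset

/-- The inversion identity `w_p(n) = 1 / (w_{Op}(N - n) Φ(n))` for the cyclic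
functions `w_p` on the Fermat curve, with `Op = (ω⁻¹x⁻¹, ω^{-1/2}x⁻¹y)` and
`Φ(n) = (-1)^n ω^{n²/2}`; the root-of-unity analogue of
`Γ(x)Γ(1-x) = π/sin(πx)`. -/
theorem cyclic_wp_inversion (N : ℕ) (hN : 2 ≤ N) (x y : ℂ)
    (hx : x ≠ 0) (hy : y ≠ 0)
    (ω ω2 : ℂ) (hω : ω = Complex.exp (2 * Real.pi * Complex.I / N))
    (hω2 : ω2 = Complex.exp (Real.pi * Complex.I / N))
    (hxn : ∀ n : ℕ, ω ^ n * x ≠ 1)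
    (hferm : x ^ N + y ^ N = 1)
    (wp wOp : ℕ → ℂ) (Φ : ℕ → ℂ)
    (hwp : ∀ n, wp n = ∏ k ∈ Finset.range n, y / (1 - ω ^ (k + 1) * x))
    (hwOp : ∀ n, wOp n =
      ∏ k ∈ Finset.range n, (ω2⁻¹ * x⁻¹ * y) / (1 - ω ^ (k + 1) * (ω⁻¹ * x⁻¹)))
    (hΦ : ∀ n, Φ n = (-1 : ℂ) ^ n * ω2 ^ (n ^ 2)) :
    ∀ n, n < N → wp n = 1 / (wOp (N - n) * Φ n) := by
  have hprim : IsPrimitiveRoot ω N := by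
    rw [hω]; exact Complex.isPrimitiveRoot_exp N (by omega)
  have hω2sq : ω2 ^ 2 = ω := by
    rw [hω, hω2, ← Complex.exp_nat_mul]; congr 1; push_cast
    have : (N : ℂ) ≠ 0 := Nat.cast_ne_zero.mpr (by omega)
    field_simp
  have hω2N : ω2 ^ N = -1 := by
    have : (N : ℂ) ≠ 0 := Nat.cast_ne_zero.mpr (by omega)
    rw [hω2, ← Complex.exp_nat_mul,
      show (N:ℂ) * (Real.pi * Complex.I / N) = Real.pi * Complex.I by field_simp]
    exact Complex.exp_pi_mul_I
  have hω2ne : ω2 ≠ 0 := by rw [hω2]; exact Complex.exp_ne_zero _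
  have hωne : ω ≠ 0 := by rw [hω]; exact Complex.exp_ne_zero _
  have hωN : ω ^ N = 1 := hprim.pow_eq_one
  have hden : ∀ k : ℕ, (1 : ℂ) - ω ^ k * x ≠ 0 := fun k =>
    sub_ne_zero_of_ne (Ne.symm (hxn k))
  have hxk : ∀ k : ℕ, k ≤ N → x ≠ ω ^ k := by
    intro k hk h
    exact hxn (N - k) (by rw [h, ← pow_add, Nat.sub_add_cancel hk, hωN])
  -- product of (1 - ω^k x) over all k
  have hprodN : ∏ k ∈ range N, (1 - ω ^ k * x) = y ^ N := by
    have himg : (range N).image (ω ^ ·) = Polynomial.nthRootsFinset N (1 : ℂ) := by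
      apply Finset.eq_of_subset_of_card_le
      · intro z hz
        simp only [mem_image] at hz
        obtain ⟨k, hk, rfl⟩ := hz
        exact (Polynomial.mem_nthRootsFinset (by omega) (1 : ℂ)).2 (by
          rw [← pow_mul, mul_comm, pow_mul, hωN, one_pow])
      · rw [hprim.card_nthRootsFinset, Finset.card_image_of_injOn hprim.injOn_pow,
          card_range]
    have h1 := hprim.pow_sub_pow_eq_prod_sub_mul (1 : ℂ) x (by omega)
    rw [one_pow, ← himg,
      Finset.prod_image (fun a ha b hb h => hprim.injOn_pow ha hb h)] at h1
    rw [← h1]; linear_combination -hferm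
  -- wp N = 1
  have hwpN : wp N = 1 := by
    rw [hwp, Finset.prod_div_distrib, Finset.prod_const, card_range]
    have hprodsh : ∏ k ∈ range N, (1 - ω ^ (k + 1) * x) = y ^ N := by
      have h1 : (1 : ℂ) - 1 * x ≠ 0 := by simpa using hden 0
      have e1 : ∏ k ∈ range (N + 1), (1 - ω ^ k * x) =
          (∏ k ∈ range N, (1 - ω ^ (k + 1) * x)) * (1 - ω ^ 0 * x) :=
        Finset.prod_range_succ' _ N
      rw [Finset.prod_range_succ, hprodN, hωN, pow_zero] at e1
      exact mul_right_cancel₀ h1 e1.symm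
    rw [hprodsh]
    exact div_self (pow_ne_zero _ hy)
  have hwpne : ∀ n, wp n ≠ 0 := by
    intro n
    rw [hwp]
    exact Finset.prod_ne_zero_iff.2 fun k _ => div_ne_zero hy (hden (k + 1))
  intro n hn
  obtain ⟨m, hmn⟩ : ∃ m, m + n = N := ⟨N - n, by omega⟩
  have hm : N - n = m := by omega
  rw [hm]
  have hm1 : 1 ≤ m := by omega
  -- termwise rewriting of wOp
  have hterm : ∀ k ∈ range m,
      (ω2⁻¹ * x⁻¹ * y) / (1 - ω ^ (k + 1) * (ω⁻¹ * x⁻¹)) =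
      (-1) * ω2⁻¹ * (ω⁻¹) ^ k * (y / (1 - ω ^ (N - k) * x)) := by
    intro k hk
    rw [mem_range] at hk
    have hkN : k ≤ N := by omega
    have ha : ω ^ k ≠ 0 := pow_ne_zero _ hωne
    have hNk : ω ^ (N - k) = (ω ^ k)⁻¹ := by
      rw [pow_sub₀ _ hωne hkN, hωN, one_mul]
    have e1 : ω ^ (k + 1) * (ω⁻¹ * x⁻¹) = ω ^ k * x⁻¹ := by
      rw [pow_succ]; field_simp
    have hxa : x - ω ^ k ≠ 0 := sub_ne_zero_of_ne (hxk k hkN)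
    rw [e1, hNk, inv_pow,
      show (-1:ℂ) * ω2⁻¹ * (ω ^ k)⁻¹ * (y / (1 - (ω ^ k)⁻¹ * x)) =
        (-1 * ω2⁻¹ * (ω ^ k)⁻¹ * y) / (1 - (ω ^ k)⁻¹ * x) from (mul_div_assoc _ _ _).symm]
    have d1 : (1 : ℂ) - ω ^ k * x⁻¹ ≠ 0 := by
      rw [show (1 : ℂ) - ω ^ k * x⁻¹ = (x - ω ^ k) * x⁻¹ by field_simp]
      exact mul_ne_zero hxa (inv_ne_zero hx)
    have d2 : (1 : ℂ) - (ω ^ k)⁻¹ * x ≠ 0 := by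
      rw [show (1 : ℂ) - (ω ^ k)⁻¹ * x = (ω ^ k - x) * (ω ^ k)⁻¹ by field_simp]
      exact mul_ne_zero (fun h => hxa (by linear_combination -h)) (inv_ne_zero ha)
    rw [div_eq_div_iff d1 d2]
    field_simp
    try ring
  -- wOp m in terms of wp
  have hwOpm : wOp m = (-1 : ℂ) ^ m * (ω2⁻¹) ^ m *
      (ω⁻¹) ^ (∑ k ∈ range m, k) * (wp N * (wp n)⁻¹) := by
    rw [hwOp, Finset.prod_congr rfl hterm]
    rw [Finset.prod_mul_distrib, Finset.prod_mul_distrib, Finset.prod_mul_distrib]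
    congr 1
    · rw [Finset.prod_const, Finset.prod_const, card_range, Finset.prod_pow_eq_pow_sum]
      try ring
    · have refl1 : ∏ k ∈ range m, y / (1 - ω ^ (N - k) * x) =
          ∏ j ∈ range m, y / (1 - ω ^ (n + 1 + j) * x) := by
        rw [← Finset.prod_range_reflect (fun k => y / (1 - ω ^ (N - k) * x)) m]
        apply Finset.prod_congr rfl
        intro j hj
        rw [mem_range] at hj
        rw [show N - (m - 1 - j) = n + 1 + j by omega]
      have refl2 : ∏ j ∈ range m, y / (1 - ω ^ (n + 1 + j) * x) =
          ∏ k ∈ Ico n N, y / (1 - ω ^ (k + 1) * x) := by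
        rw [Finset.prod_Ico_eq_prod_range]
        apply Finset.prod_congr (by rw [hm]) ?_
        intro j hj
        rw [show n + 1 + j = n + j + 1 by omega]
      rw [refl1, refl2, eq_comm, mul_inv_eq_iff_eq_mul₀ (hwpne n), hwp N, hwp n,
        mul_comm, ← Finset.prod_range_mul_prod_Ico _ (le_of_lt hn)]
  -- the scalar identity
  have hsum2 : (∑ k ∈ range m, k) * 2 = m * (m - 1) := Finset.sum_range_id_mul_two m
  have hm2 : m + 2 * (∑ k ∈ range m, k) = m ^ 2 := by
    rw [mul_comm 2, hsum2]
    obtain ⟨m', rfl⟩ : ∃ m', m = m' + 1 := ⟨m - 1, by omega⟩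
    simp only [Nat.add_sub_cancel]
    ring
  have e1 : ω2 ^ m * ω ^ (∑ k ∈ range m, k) = ω2 ^ (m ^ 2) := by
    rw [← hω2sq, ← pow_mul, ← pow_add, hm2]
  have eA : ω2 ^ (2 * (N * n)) = 1 := by
    rw [pow_mul, hω2sq, pow_mul, hωN, one_pow]
  have eB : ω2 ^ (N ^ 2) = (-1 : ℂ) ^ N := by
    rw [show N ^ 2 = N * N by ring, pow_mul, hω2N]
  have e3 : ω2 ^ (m ^ 2) = (-1 : ℂ) ^ N * ω2 ^ (n ^ 2) := by
    have hnat : m ^ 2 + 2 * (N * n) = N ^ 2 + n ^ 2 := by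
      obtain ⟨m', hm'⟩ : ∃ m', N = n + m' := ⟨m, by omega⟩
      have hmm : m = m' := by omega
      subst hm' hmm
      ring
    calc ω2 ^ (m ^ 2) = ω2 ^ (m ^ 2) * ω2 ^ (2 * (N * n)) := by rw [eA, mul_one]
      _ = ω2 ^ (N ^ 2 + n ^ 2) := by rw [← pow_add, hnat]
      _ = (-1 : ℂ) ^ N * ω2 ^ (n ^ 2) := by rw [pow_add, eB]
  have e4 : (-1 : ℂ) ^ m * (-1 : ℂ) ^ n = (-1 : ℂ) ^ N := by
    rw [← pow_add, hmn]
  have hmain : (-1 : ℂ) ^ m * (-1 : ℂ) ^ n * ω2 ^ (n ^ 2) =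
      ω2 ^ m * ω ^ (∑ k ∈ range m, k) := by
    rw [e4, e1, e3]
  have key : (-1 : ℂ) ^ m * (ω2⁻¹) ^ m * (ω⁻¹) ^ (∑ k ∈ range m, k) *
      ((-1 : ℂ) ^ n * ω2 ^ (n ^ 2)) = 1 := by
    rw [inv_pow, inv_pow]
    have hne1 : ω2 ^ m ≠ 0 := pow_ne_zero _ hω2ne
    have hne2 : ω ^ (∑ k ∈ range m, k) ≠ 0 := pow_ne_zero _ hωne
    field_simp
    linear_combination hmain
  rw [hwOpm, hΦ n, hwpN]
  have hfin : ((-1 : ℂ) ^ m * (ω2⁻¹) ^ m * (ω⁻¹) ^ (∑ k ∈ range m, k) *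
      (1 * (wp n)⁻¹)) * ((-1 : ℂ) ^ n * ω2 ^ (n ^ 2)) = (wp n)⁻¹ := by
    calc ((-1 : ℂ) ^ m * (ω2⁻¹) ^ m * (ω⁻¹) ^ (∑ k ∈ range m, k) *
        (1 * (wp n)⁻¹)) * ((-1 : ℂ) ^ n * ω2 ^ (n ^ 2))
        = ((-1 : ℂ) ^ m * (ω2⁻¹) ^ m * (ω⁻¹) ^ (∑ k ∈ range m, k) *
          ((-1 : ℂ) ^ n * ω2 ^ (n ^ 2))) * (wp n)⁻¹ := by ring
      _ = (wp n)⁻¹ := by rw [key, one_mul]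
  rw [hfin, one_div, inv_inv]
end

section
/- Rational Fay identity: Let P₀,…,P_{g-1}, P₀',…,P_{g-1}' be fixed complex parameters with the Pⱼ pairwise distinct, and for a vector f = (f₀,…,f_{g-1}) define H(f) = det(Pⱼ^i − fⱼ·(Pⱼ')^i)_{i,j=0}^{g-1} / ∏_{i>j}(Pᵢ−Pⱼ), and σⱼ(A,B) = ((Pⱼ'−A)(Pⱼ−B))/((Pⱼ'−B)(Pⱼ−A)). Then for pairwise distinct A, B, C, D (distinct from all Pⱼ, Pⱼ'): H(f)·H(f·σ(A,B)·σ(C,D)) = [A,B;D,C]·H(f·σ(A,B))·H(f·σ(C,D)) + [A,D;B,C]·H(f·σ(A,D))·H(f·σ(C,B)), where f·σ(A,B) denotes the componentwise product (fⱼ·σⱼ(A,B))ⱼ and [A,B;C,D] = (A−C)(B−D)/((A−D)(B−C)). -/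
open Finset

/-- The cross-ratio `[A,B;C,D] = (A-C)(B-D)/((A-D)(B-C))`. -/
noncomputable def crossRatio (A B C D : ℂ) : ℂ :=
  (A - C) * (B - D) / ((A - D) * (B - C))

/-- `σⱼ(A,B) = (Pⱼ'-A)(Pⱼ-B)/((Pⱼ'-B)(Pⱼ-A))`. -/
noncomputable def sigmaFn (P P' A B : ℂ) : ℂ :=
  (P' - A) * (P - B) / ((P' - B) * (P - A))

/-- The rational Θ-function
`H(f) = det(Pⱼ^i − fⱼ (Pⱼ')^i) / ∏_{i>j} (Pᵢ − Pⱼ)`. -/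
noncomputable def Hfun (g : ℕ) (P P' : Fin g → ℂ) (f : Fin g → ℂ) : ℂ :=
  Matrix.det (Matrix.of fun i j : Fin g => P j ^ (i : ℕ) - f j * P' j ^ (i : ℕ)) /
    ∏ p ∈ Finset.univ.filter (fun p : Fin g × Fin g => p.2 < p.1), (P p.1 - P p.2)

/-!
Write `[x y]` for the determinant of the `(g + 2) × (g + 2)` matrix with rows `x`, `y`,
`M₀, …, M_{g-1}`; these brackets satisfy the three-term Plücker relation. Take
`Mⱼ = (Pⱼ^i)ᵢ - φⱼ (Pⱼ'^i)ᵢ` and for `x, y` the moment vectors `(X^i)ᵢ`, `X ∈ {A, B, C, D}`.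
The column operations `cᵢ₊₁ ↦ cᵢ₊₁ - X cᵢ` remove the row `(X^i)ᵢ` at the cost of a factor
`Pⱼ - X` on the `Pⱼ`-part and `Pⱼ' - X` on the `Pⱼ'`-part of each `Mⱼ`. Hence `[X Y]` is
`(Y - X) ∏ (Pⱼ - X)(Pⱼ - Y)` times the numerator of `H` at
`φⱼ (Pⱼ' - X)(Pⱼ' - Y) / ((Pⱼ - X)(Pⱼ - Y))`. For `φⱼ = fⱼ (Pⱼ - B)(Pⱼ - D) / ((Pⱼ' - B)(Pⱼ' - D))`
these six arguments are exactly those of Fay's identity, which is then the Plücker relation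
divided by `∏ (Pⱼ - A)(Pⱼ - B)(Pⱼ - C)(Pⱼ - D)` and by the square of the Vandermonde
denominator of `H`.
-/

namespace RationalFay

open Matrix

variable {R : Type*} [CommRing R]

def powVec (m : ℕ) (x : R) : Fin m → R := fun i => x ^ (i : ℕ)

def shiftSub (m : ℕ) (X : R) : (Fin (m + 1) → R) →ₗ[R] Fin m → R :=
  LinearMap.funLeft R R Fin.succ - X • LinearMap.funLeft R R Fin.castSucc

lemma shiftSub_apply (m : ℕ) (X : R) (v : Fin (m + 1) → R) (i : Fin m) :
    shiftSub m X v i = v i.succ - X * v i.castSucc := rfl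

lemma shiftSub_powVec (m : ℕ) (X Q : R) :
    shiftSub m X (powVec (m + 1) Q) = (Q - X) • powVec m Q := by
  ext i
  simp only [shiftSub_apply, powVec, Fin.val_succ, Fin.val_castSucc, Pi.smul_apply, smul_eq_mul]
  ring

theorem det_cons_powVec {m : ℕ} (X : R) (w : Fin m → Fin (m + 1) → R) :
    det (of (Fin.cons (powVec (m + 1) X) w)) = det (of fun k => shiftSub m X (w k)) := by
  -- subtracting `X` times column `i` from column `i + 1` clears the first row
  rw [det_eq_of_forall_col_eq_smul_add_pred (fun _ => X)
    (B := of (Fin.cons (Fin.cons 1 0) fun k => Fin.cons (w k 0) (shiftSub m X (w k))))]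
  · rw [det_succ_row_zero, Fin.sum_univ_succ]
    simp only [of_apply, Fin.cons_zero, Fin.cons_succ, Fin.succAbove_zero, Pi.zero_apply,
      Fin.val_zero, pow_zero, one_mul, mul_one, mul_zero, zero_mul, sum_const_zero, add_zero]
    rfl
  · intro i
    refine Fin.cases ?_ (fun k => ?_) i <;> simp [powVec]
  · intro i j
    refine Fin.cases ?_ (fun k => ?_) i
    · simp only [of_apply, Fin.cons_zero, Fin.cons_succ, powVec, Fin.val_succ, Fin.val_castSucc,
        Pi.zero_apply, pow_succ]
      ring
    · simp [shiftSub_apply]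

lemma det_cons_smul {m : ℕ} (c : R) (v : Fin (m + 1) → R) (w : Fin m → Fin (m + 1) → R) :
    det (of (Fin.cons (c • v) w)) = c * det (of (Fin.cons v w)) := by
  simp only [det_succ_row_zero, mul_sum, of_apply, Fin.cons_zero, Pi.smul_apply, smul_eq_mul]
  refine sum_congr rfl fun j _ => ?_
  simp only [submatrix, of_apply, Fin.cons_succ]
  ring

theorem det_cons_cons_powVec {m : ℕ} (X Y : R) (w : Fin m → Fin (m + 2) → R) :
    det (of (Fin.cons (powVec (m + 2) X) (Fin.cons (powVec (m + 2) Y) w))) =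
      (Y - X) * det (of fun k => shiftSub m Y (shiftSub (m + 1) X (w k))) := by
  have hrows : (fun k => shiftSub (m + 1) X
        ((Fin.cons (powVec (m + 2) Y) w : Fin (m + 1) → Fin (m + 2) → R) k)) =
      Fin.cons ((Y - X) • powVec (m + 1) Y) fun k => shiftSub (m + 1) X (w k) := by
    ext k : 1
    refine Fin.cases ?_ (fun k => ?_) k
    · simp [shiftSub_powVec]
    · simp
  rw [det_cons_powVec, hrows, det_cons_smul, det_cons_powVec]

def bracket {n : ℕ} (M : Fin n → Fin (n + 2) → R) (x y : Fin (n + 2) → R) : R :=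
  det (of (Fin.cons x (Fin.cons y M)))

def cofactorVec {m : ℕ} (w : Fin m → Fin (m + 1) → R) : Fin (m + 1) → R :=
  fun j => (-1) ^ (j : ℕ) * det (of fun i k => w i (j.succAbove k))

lemma det_cons_eq_dotProduct {m : ℕ} (x : Fin (m + 1) → R) (w : Fin m → Fin (m + 1) → R) :
    det (of (Fin.cons x w)) = x ⬝ᵥ cofactorVec w := by
  rw [det_succ_row_zero, dotProduct]
  refine sum_congr rfl fun j _ => ?_
  simp only [cofactorVec, submatrix, of_apply, Fin.cons_zero, Fin.cons_succ]
  ring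

lemma bracket_row_left {n : ℕ} (M : Fin n → Fin (n + 2) → R) (k : Fin n) (y : Fin (n + 2) → R) :
    bracket M (M k) y = 0 :=
  det_zero_of_row_eq (i := 0) (j := k.succ.succ) (Fin.succ_ne_zero _).symm (by ext; simp)

theorem bracket_plucker [IsDomain R] {n : ℕ} (M : Fin n → Fin (n + 2) → R)
    (a b c d : Fin (n + 2) → R) :
    bracket M b a * bracket M c d - bracket M c a * bracket M b d + bracket M d a * bracket M b c
      = 0 := by
  -- the first column of `N` is `cofactorVec (a, M)` applied to the other columns, so `det N = 0`;
  -- expanding `det N` along that column gives the relation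
  set x : Fin (n + 3) → Fin (n + 2) → R := Fin.cons b (Fin.cons c (Fin.cons d M))
  set N : Matrix (Fin (n + 3)) (Fin (n + 3)) R := of fun k => Fin.cons (bracket M (x k) a) (x k)
  have hN : N.det = 0 := by
    refine exists_mulVec_eq_zero_iff.mp ⟨Fin.cons (-1) (cofactorVec (Fin.cons a M)), ?_, ?_⟩
    · exact fun h => by simpa using congrFun h 0
    · ext k
      simp [N, mulVec, dotProduct, Fin.sum_univ_succ, bracket, det_cons_eq_dotProduct]
  have hminor : ∀ k : Fin (n + 3), (N.submatrix k.succAbove Fin.succ).det =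
      det (of (x ∘ k.succAbove)) := fun _ => rfl
  have minor0 : det (of (x ∘ Fin.succAbove 0)) = bracket M c d := by
    simp only [x, Fin.succAbove_zero, Fin.cons_comp_succ]; rfl
  have minor1 : det (of (x ∘ (Fin.succ 0).succAbove)) = bracket M b d := by
    rw [Fin.cons_comp_succ_succAbove]; rfl
  have minor2 : det (of (x ∘ (Fin.succ 0).succ.succAbove)) = bracket M b c := by
    rw [Fin.cons_comp_succ_succAbove, bracket]
    exact congrArg (fun v => det (of (Fin.cons b v))) (Fin.cons_comp_succ_succAbove _ _ _)
  rw [det_succ_column_zero] at hN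
  simp only [hminor, Fin.sum_univ_succ] at hN
  rw [minor0, minor1, minor2] at hN
  simp only [N, x, of_apply, Fin.cons_zero, Fin.cons_succ, bracket_row_left, mul_zero, zero_mul,
    sum_const_zero, add_zero, Fin.val_zero, Fin.val_succ] at hN
  linear_combination hN

def Hnum {g : ℕ} (P P' f : Fin g → R) : R :=
  det (of fun i j : Fin g => P j ^ (i : ℕ) - f j * P' j ^ (i : ℕ))

theorem bracket_powVec {n : ℕ} (P P' φ ψ : Fin n → R) (X Y : R)
    (hψ : ∀ j, φ j * ((P' j - X) * (P' j - Y)) = (P j - X) * (P j - Y) * ψ j) :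
    bracket (fun j => powVec (n + 2) (P j) - φ j • powVec (n + 2) (P' j))
        (powVec (n + 2) X) (powVec (n + 2) Y) =
      (Y - X) * (∏ j, (P j - X)) * (∏ j, (P j - Y)) * Hnum P P' ψ := by
  have hrows : (of fun j => shiftSub n Y (shiftSub (n + 1) X
        (powVec (n + 2) (P j) - φ j • powVec (n + 2) (P' j)))) =
      of fun j i => (P j - X) * (P j - Y) *
        (of fun i j : Fin n => P j ^ (i : ℕ) - ψ j * P' j ^ (i : ℕ))ᵀ j i := by
    ext j i
    simp only [map_sub, map_smul, shiftSub_powVec, smul_smul, of_apply, transpose_apply,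
      Pi.sub_apply, Pi.smul_apply, smul_eq_mul, powVec]
    linear_combination (-P' j ^ (i : ℕ)) * hψ j
  rw [bracket, det_cons_cons_powVec, hrows, det_mul_column, det_transpose, prod_mul_distrib, Hnum]
  ring

theorem Hnum_plucker {g : ℕ} (P P' : Fin g → ℂ) (A B C D : ℂ)
    (hP : ∀ j, P j ≠ A ∧ P j ≠ B ∧ P j ≠ C ∧ P j ≠ D) (hP' : ∀ j, P' j ≠ B ∧ P' j ≠ D)
    (f : Fin g → ℂ) :
    (A - C) * (B - D) * (Hnum P P' f *
        Hnum P P' (fun j => f j * sigmaFn (P j) (P' j) A B * sigmaFn (P j) (P' j) C D)) =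
      (A - D) * (B - C) * (Hnum P P' (fun j => f j * sigmaFn (P j) (P' j) A B) *
          Hnum P P' (fun j => f j * sigmaFn (P j) (P' j) C D)) -
        (A - B) * (D - C) * (Hnum P P' (fun j => f j * sigmaFn (P j) (P' j) A D) *
          Hnum P P' (fun j => f j * sigmaFn (P j) (P' j) C B)) := by
  have hne : ∀ j, P j - A ≠ 0 ∧ P j - B ≠ 0 ∧ P j - C ≠ 0 ∧ P j - D ≠ 0 ∧
      P' j - B ≠ 0 ∧ P' j - D ≠ 0 := fun j =>
    ⟨sub_ne_zero.mpr (hP j).1, sub_ne_zero.mpr (hP j).2.1, sub_ne_zero.mpr (hP j).2.2.1,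
      sub_ne_zero.mpr (hP j).2.2.2, sub_ne_zero.mpr (hP' j).1, sub_ne_zero.mpr (hP' j).2⟩
  set φ : Fin g → ℂ := fun j => f j * ((P j - B) * (P j - D) / ((P' j - B) * (P' j - D)))
  have brBA := bracket_powVec P P' φ (fun j => f j * sigmaFn (P j) (P' j) A D) B A fun j => by
    obtain ⟨_, _, _, _, _, _⟩ := hne j; simp only [φ, sigmaFn]; field_simp
  have brCD := bracket_powVec P P' φ (fun j => f j * sigmaFn (P j) (P' j) C B) C D fun j => by
    obtain ⟨_, _, _, _, _, _⟩ := hne j; simp only [φ, sigmaFn]; field_simp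
  have brCA := bracket_powVec P P' φ
      (fun j => f j * sigmaFn (P j) (P' j) A B * sigmaFn (P j) (P' j) C D) C A fun j => by
    obtain ⟨_, _, _, _, _, _⟩ := hne j; simp only [φ, sigmaFn]; field_simp
  have brBD := bracket_powVec P P' φ f B D fun j => by
    obtain ⟨_, _, _, _, _, _⟩ := hne j; simp only [φ]; field_simp
  have brDA := bracket_powVec P P' φ (fun j => f j * sigmaFn (P j) (P' j) A B) D A fun j => by
    obtain ⟨_, _, _, _, _, _⟩ := hne j; simp only [φ, sigmaFn]; field_simp
  have brBC := bracket_powVec P P' φ (fun j => f j * sigmaFn (P j) (P' j) C D) B C fun j => by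
    obtain ⟨_, _, _, _, _, _⟩ := hne j; simp only [φ, sigmaFn]; field_simp
  have hpl := bracket_plucker (fun j => powVec (g + 2) (P j) - φ j • powVec (g + 2) (P' j))
    (powVec _ A) (powVec _ B) (powVec _ C) (powVec _ D)
  rw [brBA, brCD, brCA, brBD, brDA, brBC] at hpl
  have hE : (∏ j, (P j - A)) * (∏ j, (P j - B)) * (∏ j, (P j - C)) * (∏ j, (P j - D)) ≠ 0 := by
    simp only [mul_ne_zero_iff, prod_ne_zero_iff]
    exact ⟨⟨⟨fun j _ => (hne j).1, fun j _ => (hne j).2.1⟩, fun j _ => (hne j).2.2.1⟩,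
      fun j _ => (hne j).2.2.2.1⟩
  refine sub_eq_zero.mp ((mul_eq_zero.mp ?_).resolve_left hE)
  linear_combination hpl

theorem Hnum_fay {g : ℕ} (P P' : Fin g → ℂ) (A B C D : ℂ) (hAC : A ≠ C) (hBD : B ≠ D)
    (hP : ∀ j, P j ≠ A ∧ P j ≠ B ∧ P j ≠ C ∧ P j ≠ D) (hP' : ∀ j, P' j ≠ B ∧ P' j ≠ D)
    (f : Fin g → ℂ) :
    Hnum P P' f *
        Hnum P P' (fun j => f j * sigmaFn (P j) (P' j) A B * sigmaFn (P j) (P' j) C D) =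
      crossRatio A B D C *
          Hnum P P' (fun j => f j * sigmaFn (P j) (P' j) A B) *
          Hnum P P' (fun j => f j * sigmaFn (P j) (P' j) C D) +
        crossRatio A D B C *
          Hnum P P' (fun j => f j * sigmaFn (P j) (P' j) A D) *
          Hnum P P' (fun j => f j * sigmaFn (P j) (P' j) C B) := by
  have := sub_ne_zero.mpr hAC
  have := sub_ne_zero.mpr hBD
  have := sub_ne_zero.mpr hBD.symm
  rw [crossRatio, crossRatio]
  linear_combination (norm := skip)
    ((A - C) * (B - D))⁻¹ * Hnum_plucker P P' A B C D hP hP' f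
  field_simp
  ring

end RationalFay

theorem rational_fay_general (g : ℕ) (P P' : Fin g → ℂ)
    (A B C D : ℂ)
    (hAC : A ≠ C)
    (hBD : B ≠ D)
    (hPA : ∀ j, P j ≠ A ∧ P j ≠ B ∧ P j ≠ C ∧ P j ≠ D)
    (hP'A : ∀ j, P' j ≠ A ∧ P' j ≠ B ∧ P' j ≠ C ∧ P' j ≠ D)
    (f : Fin g → ℂ) :
    Hfun g P P' f *
        Hfun g P P' (fun j => f j * sigmaFn (P j) (P' j) A B * sigmaFn (P j) (P' j) C D) =
      crossRatio A B D C *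
          Hfun g P P' (fun j => f j * sigmaFn (P j) (P' j) A B) *
          Hfun g P P' (fun j => f j * sigmaFn (P j) (P' j) C D) +
        crossRatio A D B C *
          Hfun g P P' (fun j => f j * sigmaFn (P j) (P' j) A D) *
          Hfun g P P' (fun j => f j * sigmaFn (P j) (P' j) C B) := by
  have h := RationalFay.Hnum_fay P P' A B C D hAC hBD hPA
    (fun j => ⟨(hP'A j).2.1, (hP'A j).2.2.2⟩) f
  unfold RationalFay.Hnum at h
  unfold Hfun
  linear_combination
    h / (∏ p ∈ univ.filter (fun p : Fin g × Fin g => p.2 < p.1), (P p.1 - P p.2)) ^ 2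

/-- The rational Fay identity for the rational Θ-functions `H`. -/
theorem rational_fay (g : ℕ) (hg : 1 ≤ g) (P P' : Fin g → ℂ)
    (hP : Function.Injective P)
    (A B C D : ℂ)
    (hAB : A ≠ B) (hAC : A ≠ C) (hAD : A ≠ D)
    (hBC : B ≠ C) (hBD : B ≠ D) (hCD : C ≠ D)
    (hPA : ∀ j, P j ≠ A ∧ P j ≠ B ∧ P j ≠ C ∧ P j ≠ D)
    (hP'A : ∀ j, P' j ≠ A ∧ P' j ≠ B ∧ P' j ≠ C ∧ P' j ≠ D)
    (f : Fin g → ℂ) :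
    Hfun g P P' f *
        Hfun g P P' (fun j => f j * sigmaFn (P j) (P' j) A B * sigmaFn (P j) (P' j) C D) =
      crossRatio A B D C *
          Hfun g P P' (fun j => f j * sigmaFn (P j) (P' j) A B) *
          Hfun g P P' (fun j => f j * sigmaFn (P j) (P' j) C D) +
        crossRatio A D B C *
          Hfun g P P' (fun j => f j * sigmaFn (P j) (P' j) A D) *
          Hfun g P P' (fun j => f j * sigmaFn (P j) (P' j) C B) :=
  rational_fay_general g P P' A B C D hAC hBD hPA hP'A f
end

section
/- Special case g = 1 of the rational Fay identity: for complex numbers P, P', A, B, C, D (pairwise distinct where needed) and any f ∈ ℂ, setting σ(A,B) = (P'−A)(P−B)/((P'−B)(P−A)), one has (1−f)·(1−f·σ(A,B)σ(C,D)) = [A,B;D,C]·(1−f·σ(A,B))·(1−f·σ(C,D)) + [A,D;B,C]·(1−f·σ(A,D))·(1−f·σ(C,B)), where [A,B;C,D] = (A−C)(B−D)/((A−D)(B−C)). -/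
theorem one_sub_mul_one_sub_mul_eq_of_coeffs {R : Type*} [CommRing R] {x y u v r s : R}
    (hrs : r + s = 1) (hlin : r * (x + y) + s * (u + v) = 1 + x * y) (huv : u * v = x * y)
    (f : R) :
    (1 - f) * (1 - f * x * y) = r * (1 - f * x) * (1 - f * y) + s * (1 - f * u) * (1 - f * v) := by
  linear_combination (-1 - f ^ 2 * x * y) * hrs + f * hlin - f ^ 2 * s * huv

theorem crossRatio_add_crossRatio {A B C D : ℂ} (hAC : A ≠ C) (hBD : B ≠ D) :
    crossRatio A B D C + crossRatio A D B C = 1 := by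
  have := sub_ne_zero.mpr hAC
  have := sub_ne_zero.mpr hBD
  unfold crossRatio
  field_simp
  ring

theorem sigmaFn_mul_sigmaFn_comm (P P' A B C D : ℂ) :
    sigmaFn P P' A D * sigmaFn P P' C B = sigmaFn P P' A B * sigmaFn P P' C D := by
  unfold sigmaFn
  rw [div_mul_div_comm, div_mul_div_comm]
  ring

theorem crossRatio_mul_sigmaFn_add {P P' A B C D : ℂ}
    (hPA : P ≠ A) (hPC : P ≠ C) (hP'B : P' ≠ B) (hP'D : P' ≠ D) (hAC : A ≠ C) (hBD : B ≠ D) :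
    crossRatio A B D C * (sigmaFn P P' A B + sigmaFn P P' C D) +
        crossRatio A D B C * (sigmaFn P P' A D + sigmaFn P P' C B) =
      1 + sigmaFn P P' A B * sigmaFn P P' C D := by
  have := sub_ne_zero.mpr hPA
  have := sub_ne_zero.mpr hPC
  have := sub_ne_zero.mpr hP'B
  have := sub_ne_zero.mpr hP'D
  have := sub_ne_zero.mpr hAC
  have := sub_ne_zero.mpr hBD
  unfold crossRatio sigmaFn
  field_simp
  ring

theorem rational_fay_g1_general (P P' A B C D : ℂ)
    (hPA : P ≠ A) (hPC : P ≠ C)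
    (hP'B : P' ≠ B) (hP'D : P' ≠ D)
    (hAC : A ≠ C)
    (hBD : B ≠ D)
    (f : ℂ) :
    (1 - f) * (1 - f * sigmaFn P P' A B * sigmaFn P P' C D) =
      crossRatio A B D C * (1 - f * sigmaFn P P' A B) * (1 - f * sigmaFn P P' C D) +
        crossRatio A D B C * (1 - f * sigmaFn P P' A D) * (1 - f * sigmaFn P P' C B) :=
  one_sub_mul_one_sub_mul_eq_of_coeffs (crossRatio_add_crossRatio hAC hBD)
    (crossRatio_mul_sigmaFn_add hPA hPC hP'B hP'D hAC hBD) (sigmaFn_mul_sigmaFn_comm P P' A B C D) f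

/-- The genus-one (`g = 1`) case of the rational Fay identity. -/
theorem rational_fay_g1 (P P' A B C D : ℂ)
    (hPA : P ≠ A) (hPB : P ≠ B) (hPC : P ≠ C) (hPD : P ≠ D)
    (hP'A : P' ≠ A) (hP'B : P' ≠ B) (hP'C : P' ≠ C) (hP'D : P' ≠ D)
    (hAB : A ≠ B) (hAC : A ≠ C) (hAD : A ≠ D)
    (hBC : B ≠ C) (hBD : B ≠ D) (hCD : C ≠ D)
    (f : ℂ) :
    (1 - f) * (1 - f * sigmaFn P P' A B * sigmaFn P P' C D) =
      crossRatio A B D C * (1 - f * sigmaFn P P' A B) * (1 - f * sigmaFn P P' C D) +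
        crossRatio A D B C * (1 - f * sigmaFn P P' A D) * (1 - f * sigmaFn P P' C B) :=
  rational_fay_g1_general P P' A B C D hPA hPC hP'B hP'D hAC hBD f
end

section
/- (Double Fay identity underlying the Hirota equations.) For complex numbers X, Y, Y', Z, Z' and a g-vector f with parameters (P_j, P_j'), with H as before, one has (X−Y)(Y'−Z')(Z−X)·H({φ_j(X)σ_j(𝒴)σ_j(𝒵)})·H({φ_j(Y)})·H({φ_j(Z)}) + (X−Y')(Y−Z)(Z'−X)·H({φ_j(X)})·H({φ_j(Y)σ_j(𝒵)})·H({φ_j(Z)σ_j(𝒴)}) = (X−Y)(Y'−Z)(Z'−X)·H({φ_j(X)σ_j(𝒴)})·H({φ_j(Y)σ_j(𝒵)})·H({φ_j(Z)}) + (X−Y')(Y−Z')(Z−X)·H({φ_j(Z)σ_j(𝒴)})·H({φ_j(Y)})·H({φ_j(X)σ_j(𝒵)}), where φ_j(W) = f_j·(P_j−W)/(P_j'−W), σ_j(𝒴) = σ_j(Y',Y) = (P_j'−Y')(P_j−Y)/((P_j'−Y)(P_j−Y')), and σ_j(𝒵) = σ_j(Z',Z). -/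
set_option maxHeartbeats 1600000


open Finset Matrix

/-- `φⱼ(W) = fⱼ (Pⱼ - W)/(Pⱼ' - W)`. -/
noncomputable def phiFn (P P' f W : ℂ) : ℂ := f * ((P - W) / (P' - W))

lemma det_step (m : ℕ) (B : Matrix (Fin (m + 1)) (Fin (m + 1)) ℂ) (U : ℂ)
    (h : ∀ i, B (Fin.last m) i = U ^ (i : ℕ)) :
    B.det = (-1) ^ m * Matrix.det (Matrix.of fun (j i : Fin m) =>
      B j.castSucc i.succ - U * B j.castSucc i.castSucc) := by
  classical
  set E : Matrix (Fin (m + 1)) (Fin (m + 1)) ℂ :=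
    Matrix.of fun l k => if l = k then 1 else if (k : ℕ) = (l : ℕ) + 1 then -U else 0 with hE
  have hEdet : E.det = 1 := by
    have ht : E.BlockTriangular id := by
      intro i j hij
      have hlt : (j : ℕ) < (i : ℕ) := hij
      simp only [hE, Matrix.of_apply]
      rw [if_neg (fun hc => by subst hc; exact lt_irrefl _ hlt), if_neg (by omega)]
    rw [Matrix.det_of_upperTriangular ht]
    apply Finset.prod_eq_one
    intro i _
    simp [hE]
  have hBE0 : ∀ j, (B * E) j 0 = B j 0 := by
    intro j
    rw [Matrix.mul_apply, Finset.sum_eq_single 0]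
    · simp [hE]
    · intro l _ hl
      have h2 : ¬ ((0 : Fin (m+1)) : ℕ) = (l : ℕ) + 1 := by simp
      simp [hE, hl, h2]
    · simp
  have hBES : ∀ j (i : Fin m), (B * E) j i.succ = B j i.succ - U * B j i.castSucc := by
    intro j i
    rw [Matrix.mul_apply]
    have hsplit : ∀ l : Fin (m+1), B j l * E l i.succ =
        (if l = i.succ then B j l else 0) + (if l = i.castSucc then -U * B j l else 0) := by
      intro l
      simp only [hE, Matrix.of_apply]
      by_cases h1 : l = i.succ
      · have hne : ¬ ((i.succ : Fin (m+1)) = i.castSucc) := by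
          intro hc
          have := congrArg Fin.val hc
          simp [Fin.val_succ] at this
        subst h1
        rw [if_pos rfl, if_pos rfl, if_neg hne, add_zero, mul_one]
      · by_cases h2 : l = i.castSucc
        · have hne2 : ¬ ((i.castSucc : Fin (m+1)) = i.succ) := by
            intro hc
            have := congrArg Fin.val hc
            simp [Fin.val_succ] at this
          subst h2
          have hv : ((i.succ : Fin (m+1)) : ℕ) = ((i.castSucc : Fin (m+1)) : ℕ) + 1 := by simp
          rw [if_neg hne2, if_pos hv, if_neg hne2, if_pos rfl, zero_add]
          ring
        · have hv : ¬ ((i.succ : Fin (m+1)) : ℕ) = (l : ℕ) + 1 := by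
            simp only [Fin.val_succ]
            intro hc
            exact h2 (Fin.ext (by simp only [Fin.coe_castSucc]; omega))
          rw [if_neg h1, if_neg hv, if_neg h1, if_neg h2, mul_zero, add_zero]
    rw [Finset.sum_congr rfl fun l _ => hsplit l, Finset.sum_add_distrib]
    rw [Finset.sum_ite_eq' Finset.univ i.succ (fun l => B j l),
      Finset.sum_ite_eq' Finset.univ i.castSucc (fun l => -U * B j l)]
    simp only [Finset.mem_univ, if_true]
    ring
  have hdet : B.det = (B * E).det := by rw [Matrix.det_mul, hEdet, mul_one]
  rw [hdet, Matrix.det_succ_row (B * E) (Fin.last m)]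
  rw [Finset.sum_eq_single 0]
  · have e0 : (B * E) (Fin.last m) 0 = 1 := by rw [hBE0, h]; simp
    rw [e0]
    have hsub : ((B * E).submatrix (Fin.last m).succAbove (0 : Fin (m+1)).succAbove)
        = Matrix.of fun (j i : Fin m) => B j.castSucc i.succ - U * B j.castSucc i.castSucc := by
      ext j i
      simp only [Matrix.submatrix_apply, Fin.succAbove_last, Fin.succAbove_zero, Matrix.of_apply]
      exact hBES j.castSucc i
    rw [hsub]
    simp [Fin.val_last]
  · intro l _ hl
    obtain ⟨i, rfl⟩ := Fin.exists_succ_eq.mpr hl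
    rw [hBES, h, h]
    simp only [Fin.val_succ, Fin.coe_castSucc, pow_succ]
    ring_nf
  · simp


section Bd

variable {n : ℕ}

/-- base matrix: first `n` rows are `s`, the last two rows are junk (zero). -/
noncomputable def bdBase (s : Fin n → Fin (n + 2) → ℂ) : Matrix (Fin (n + 2)) (Fin (n + 2)) ℂ :=
  Matrix.of fun i j => if h : (i : ℕ) < n then s ⟨i, h⟩ j else 0

/-- the bordered determinant: rows `s`, then `u`, then `v`. -/
noncomputable def Bd (s : Fin n → Fin (n + 2) → ℂ) (u v : Fin (n + 2) → ℂ) : ℂ :=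
  (((bdBase s).updateRow ⟨n, by omega⟩ u).updateRow ⟨n + 1, by omega⟩ v).det

lemma bd_ig_ne_iv : (⟨n, by omega⟩ : Fin (n + 2)) ≠ ⟨n + 1, by omega⟩ := by
  simp [Fin.ext_iff]

lemma Bd_row_ig (s : Fin n → Fin (n + 2) → ℂ) (u v : Fin (n + 2) → ℂ) :
    (((bdBase s).updateRow ⟨n, by omega⟩ u).updateRow ⟨n + 1, by omega⟩ v) ⟨n, by omega⟩ = u := by
  rw [Matrix.updateRow_ne bd_ig_ne_iv, Matrix.updateRow_self]

lemma Bd_row_iv (s : Fin n → Fin (n + 2) → ℂ) (u v : Fin (n + 2) → ℂ) :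
    (((bdBase s).updateRow ⟨n, by omega⟩ u).updateRow ⟨n + 1, by omega⟩ v) ⟨n + 1, by omega⟩ = v := by
  rw [Matrix.updateRow_self]

lemma Bd_row_s (s : Fin n → Fin (n + 2) → ℂ) (u v : Fin (n + 2) → ℂ) (k : Fin n) :
    (((bdBase s).updateRow ⟨n, by omega⟩ u).updateRow ⟨n + 1, by omega⟩ v)
      ⟨(k : ℕ), by omega⟩ = s k := by
  have h1 : (⟨(k : ℕ), by omega⟩ : Fin (n + 2)) ≠ ⟨n + 1, by omega⟩ := by
    simp [Fin.ext_iff]; omega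
  have h2 : (⟨(k : ℕ), by omega⟩ : Fin (n + 2)) ≠ ⟨n, by omega⟩ := by
    simp [Fin.ext_iff]; omega
  rw [Matrix.updateRow_ne h1, Matrix.updateRow_ne h2]
  funext j
  simp only [bdBase, Matrix.of_apply]
  rw [dif_pos k.isLt]

lemma Bd_swap (s : Fin n → Fin (n + 2) → ℂ) (u v : Fin (n + 2) → ℂ) :
    Bd s u v = -Bd s v u := by
  classical
  set ig : Fin (n + 2) := ⟨n, by omega⟩
  set iv : Fin (n + 2) := ⟨n + 1, by omega⟩
  have hne : ig ≠ iv := bd_ig_ne_iv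
  have hmat : (((bdBase s).updateRow ig u).updateRow iv v) =
      ((((bdBase s).updateRow ig v).updateRow iv u).submatrix (Equiv.swap ig iv) id) := by
    ext i j
    simp only [Matrix.submatrix_apply, id]
    by_cases h1 : i = ig
    · subst h1
      rw [Equiv.swap_apply_left]
      rw [Matrix.updateRow_ne hne, Matrix.updateRow_self, Matrix.updateRow_self]
    · by_cases h2 : i = iv
      · subst h2
        rw [Equiv.swap_apply_right, Matrix.updateRow_self,
          Matrix.updateRow_ne hne, Matrix.updateRow_self]
      · rw [Equiv.swap_apply_of_ne_of_ne h1 h2,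
          Matrix.updateRow_ne h2, Matrix.updateRow_ne h1,
          Matrix.updateRow_ne h2, Matrix.updateRow_ne h1]
  rw [Bd, hmat, Matrix.det_permute]
  rw [Equiv.Perm.sign_swap hne]
  simp [Bd]
  rfl

lemma Bd_add_right (s : Fin n → Fin (n + 2) → ℂ) (u v w : Fin (n + 2) → ℂ) :
    Bd s u (v + w) = Bd s u v + Bd s u w := by
  simp only [Bd]
  rw [Matrix.det_updateRow_add]

lemma Bd_smul_right (s : Fin n → Fin (n + 2) → ℂ) (u v : Fin (n + 2) → ℂ) (t : ℂ) :
    Bd s u (t • v) = t * Bd s u v := by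
  simp only [Bd]
  rw [Matrix.det_updateRow_smul]

lemma Bd_add_left (s : Fin n → Fin (n + 2) → ℂ) (u v w : Fin (n + 2) → ℂ) :
    Bd s (u + v) w = Bd s u w + Bd s v w := by
  rw [Bd_swap, Bd_add_right, Bd_swap s w u, Bd_swap s w v]; ring

lemma Bd_smul_left (s : Fin n → Fin (n + 2) → ℂ) (u v : Fin (n + 2) → ℂ) (t : ℂ) :
    Bd s (t • u) v = t * Bd s u v := by
  rw [Bd_swap, Bd_smul_right, Bd_swap s v u]; ring

lemma Bd_self (s : Fin n → Fin (n + 2) → ℂ) (u : Fin (n + 2) → ℂ) :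
    Bd s u u = 0 := by
  apply Matrix.det_zero_of_row_eq bd_ig_ne_iv
  rw [Bd_row_ig, Bd_row_iv]

lemma Bd_s_left (s : Fin n → Fin (n + 2) → ℂ) (k : Fin n) (v : Fin (n + 2) → ℂ) :
    Bd s (s k) v = 0 := by
  apply Matrix.det_zero_of_row_eq (i := ⟨(k : ℕ), by omega⟩) (j := ⟨n, by omega⟩)
  · simp [Fin.ext_iff]; omega
  · rw [Bd_row_s, Bd_row_ig]

lemma Bd_s_right (s : Fin n → Fin (n + 2) → ℂ) (k : Fin n) (u : Fin (n + 2) → ℂ) :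
    Bd s u (s k) = 0 := by
  rw [Bd_swap, Bd_s_left]; ring

lemma Bd_zero_left (s : Fin n → Fin (n + 2) → ℂ) (v : Fin (n + 2) → ℂ) :
    Bd s 0 v = 0 := by
  have : (0 : Fin (n + 2) → ℂ) = (0 : ℂ) • (0 : Fin (n + 2) → ℂ) := by simp
  rw [this, Bd_smul_left]; ring

lemma Bd_span_left (s : Fin n → Fin (n + 2) → ℂ) {w : Fin (n + 2) → ℂ}
    (hw : w ∈ Submodule.span ℂ (Set.range s)) (v : Fin (n + 2) → ℂ) :
    Bd s w v = 0 := by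
  induction hw using Submodule.span_induction with
  | mem x hx => obtain ⟨k, rfl⟩ := hx; exact Bd_s_left s k v
  | zero => exact Bd_zero_left s v
  | add x y _ _ hx hy => rw [Bd_add_left, hx, hy, add_zero]
  | smul t x _ hx => rw [Bd_smul_left, hx, mul_zero]

lemma pluecker (s : Fin n → Fin (n + 2) → ℂ) (a b c d : Fin (n + 2) → ℂ) :
    Bd s c d * Bd s a b - Bd s b d * Bd s a c + Bd s b c * Bd s a d = 0 := by
  classical
  by_cases hs : LinearIndependent ℂ s
  · -- independent case
    set Wsub := Submodule.span ℂ (Set.range s) with hW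
    have hfr : Module.finrank ℂ (Fin (n + 2) → ℂ) = n + 2 := Module.finrank_fin_fun ℂ
    have hfW : Module.finrank ℂ Wsub = n := by
      rw [hW, finrank_span_eq_card hs, Fintype.card_fin]
    have hquot : Module.finrank ℂ ((Fin (n + 2) → ℂ) ⧸ Wsub) = 2 := by
      have := Submodule.finrank_quotient_add_finrank Wsub
      omega
    set vec : Fin 4 → (Fin (n + 2) → ℂ) := ![a, b, c, d] with hvec
    have hdep : ¬ LinearIndependent ℂ (fun t : Fin 4 => Wsub.mkQ (vec t)) := by
      intro hli
      have := hli.fintype_card_le_finrank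
      rw [hquot, Fintype.card_fin] at this
      omega
    obtain ⟨r, hsum, i0, hi0⟩ := Fintype.not_linearIndependent_iff.mp hdep
    have hwmem : (r 0 • a + r 1 • b + r 2 • c + r 3 • d) ∈ Wsub := by
      have h4 := hsum
      rw [Fin.sum_univ_four] at h4
      simp only [hvec, Matrix.cons_val_zero, Matrix.cons_val_one, Matrix.head_cons,
        Matrix.cons_val_two, Matrix.tail_cons, Matrix.cons_val_three] at h4
      rw [← LinearMap.map_smul, ← LinearMap.map_smul, ← LinearMap.map_smul, ← LinearMap.map_smul,
        ← map_add, ← map_add, ← map_add] at h4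
      rwa [Submodule.mkQ_apply, Submodule.Quotient.mk_eq_zero] at h4
    set w : Fin (n + 2) → ℂ := r 0 • a + r 1 • b + r 2 • c + r 3 • d with hw
    have hexp : ∀ x, Bd s w x =
        r 0 * Bd s a x + r 1 * Bd s b x + r 2 * Bd s c x + r 3 * Bd s d x := by
      intro x
      rw [hw, Bd_add_left, Bd_add_left, Bd_add_left, Bd_smul_left, Bd_smul_left,
        Bd_smul_left, Bd_smul_left]
    have hwa := Bd_span_left s hwmem a
    have hwb := Bd_span_left s hwmem b
    have hwc := Bd_span_left s hwmem c
    have hwd := Bd_span_left s hwmem d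
    rw [hexp] at hwa hwb hwc hwd
    -- canonical forms
    have Ea : r 1 * Bd s a b + r 2 * Bd s a c + r 3 * Bd s a d = 0 := by
      linear_combination -hwa + r 0 * Bd_self s a + r 1 * Bd_swap s b a
        + r 2 * Bd_swap s c a + r 3 * Bd_swap s d a
    have Eb : r 0 * Bd s a b - r 2 * Bd s b c - r 3 * Bd s b d = 0 := by
      linear_combination hwb - r 1 * Bd_self s b - r 2 * Bd_swap s c b - r 3 * Bd_swap s d b
    have Ec : r 0 * Bd s a c + r 1 * Bd s b c - r 3 * Bd s c d = 0 := by
      linear_combination hwc - r 2 * Bd_self s c - r 3 * Bd_swap s d c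
    have Ed : r 0 * Bd s a d + r 1 * Bd s b d + r 2 * Bd s c d = 0 := by
      linear_combination hwd - r 3 * Bd_self s d
    have k0 : r 0 * (Bd s c d * Bd s a b - Bd s b d * Bd s a c + Bd s b c * Bd s a d) = 0 := by
      linear_combination Bd s c d * Eb - Bd s b d * Ec + Bd s b c * Ed
    have k1 : r 1 * (Bd s c d * Bd s a b - Bd s b d * Bd s a c + Bd s b c * Bd s a d) = 0 := by
      linear_combination Bd s c d * Ea + Bd s a d * Ec - Bd s a c * Ed
    have k2 : r 2 * (Bd s c d * Bd s a b - Bd s b d * Bd s a c + Bd s b c * Bd s a d) = 0 := by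
      linear_combination -(Bd s b d) * Ea - Bd s a d * Eb + Bd s a b * Ed
    have k3 : r 3 * (Bd s c d * Bd s a b - Bd s b d * Bd s a c + Bd s b c * Bd s a d) = 0 := by
      linear_combination Bd s b c * Ea + Bd s a c * Eb - Bd s a b * Ec
    have key : r i0 * (Bd s c d * Bd s a b - Bd s b d * Bd s a c + Bd s b c * Bd s a d) = 0 := by
      fin_cases i0 <;> assumption
    exact (mul_eq_zero.mp key).resolve_left hi0
  · -- dependent case : every Bd vanishes
    have hBd : ∀ u v, Bd s u v = 0 := by
      intro u v
      set M := ((bdBase s).updateRow ⟨n, by omega⟩ u).updateRow ⟨n + 1, by omega⟩ v with hM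
      have hdep : ¬ LinearIndependent ℂ (fun i : Fin (n + 2) => M i) := by
        intro hli
        apply hs
        have hemb : Function.Injective (fun k : Fin n => (⟨(k : ℕ), by omega⟩ : Fin (n + 2))) := by
          intro x y hxy
          simpa [Fin.ext_iff] using hxy
        have := hli.comp _ hemb
        have heq : ((fun i : Fin (n + 2) => M i) ∘
            (fun k : Fin n => (⟨(k : ℕ), by omega⟩ : Fin (n + 2)))) = s := by
          funext k
          exact Bd_row_s s u v k
        rwa [heq] at this
      exact (Matrix.detRowAlternating).map_linearDependent _ hdep
    simp [hBd]
end Bd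


section chain
variable (g : ℕ) (P P' c : Fin g → ℂ) (U V : ℂ)

noncomputable def srow : Fin g → Fin (g + 2) → ℂ :=
  fun j i => P j ^ (i : ℕ) - c j * P' j ^ (i : ℕ)

noncomputable def Nmat : Matrix (Fin g) (Fin g) ℂ :=
  Matrix.of fun (j i : Fin g) =>
    (P j - U) * (P j - V) * P j ^ (i : ℕ) - c j * (P' j - U) * (P' j - V) * P' j ^ (i : ℕ)

lemma Bd_vdm :
    Bd (srow g P P' c) (fun i => U ^ (i : ℕ)) (fun i => V ^ (i : ℕ))
      = (V - U) * (Nmat g P P' c U V).det := by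
  classical
  set M := ((bdBase (srow g P P' c)).updateRow ⟨g, by omega⟩ (fun i => U ^ (i : ℕ))).updateRow
      ⟨g + 1, by omega⟩ (fun i => V ^ (i : ℕ)) with hM
  -- first reduction, with scalar V
  have hlast1 : ∀ i, M (Fin.last (g + 1)) i = V ^ (i : ℕ) := by
    intro i
    have : Fin.last (g + 1) = (⟨g + 1, by omega⟩ : Fin (g + 2)) := rfl
    rw [this, hM, Bd_row_iv]
  have step1 : M.det = (-1) ^ (g + 1) * Matrix.det (Matrix.of fun (j i : Fin (g + 1)) =>
      M j.castSucc i.succ - V * M j.castSucc i.castSucc) := det_step (g + 1) M V hlast1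
  set M2 : Matrix (Fin (g + 1)) (Fin (g + 1)) ℂ :=
    Matrix.of fun (j i : Fin (g + 1)) => M j.castSucc i.succ - V * M j.castSucc i.castSucc with hM2
  -- factor (U - V) out of the last row of M2
  have hrowlastM2 : ∀ i : Fin (g + 1), M2 (Fin.last g) i = U ^ ((i : ℕ) + 1) - V * U ^ (i : ℕ) := by
    intro i
    have hcast : (Fin.last g).castSucc = (⟨g, by omega⟩ : Fin (g + 2)) := rfl
    simp only [hM2, Matrix.of_apply, hcast, hM, Bd_row_ig]
    simp [Fin.val_succ, Fin.coe_castSucc]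
  set M2' : Matrix (Fin (g + 1)) (Fin (g + 1)) ℂ :=
    M2.updateRow (Fin.last g) (fun i => U ^ (i : ℕ)) with hM2'
  have hfact : M2 = M2'.updateRow (Fin.last g) ((U - V) • fun i : Fin (g + 1) => U ^ (i : ℕ)) := by
    ext j i
    by_cases hj : j = Fin.last g
    · subst hj
      rw [Matrix.updateRow_self, hrowlastM2]
      simp [pow_succ]
      ring
    · rw [Matrix.updateRow_ne hj, hM2', Matrix.updateRow_ne hj]
  have step2 : M2.det = (U - V) * M2'.det := by
    rw [hfact, Matrix.det_updateRow_smul]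
    congr 1
    rw [hM2']
    congr 1
    ext j i
    by_cases hj : j = Fin.last g
    · subst hj; rw [Matrix.updateRow_self, Matrix.updateRow_self]
    · rw [Matrix.updateRow_ne hj, Matrix.updateRow_ne hj]
  -- second reduction, with scalar U
  have hlast2 : ∀ i, M2' (Fin.last g) i = U ^ (i : ℕ) := by
    intro i; rw [hM2', Matrix.updateRow_self]
  have step3 : M2'.det = (-1) ^ g * Matrix.det (Matrix.of fun (j i : Fin g) =>
      M2' j.castSucc i.succ - U * M2' j.castSucc i.castSucc) := det_step g M2' U hlast2
  have hfinal : (Matrix.of fun (j i : Fin g) =>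
      M2' j.castSucc i.succ - U * M2' j.castSucc i.castSucc) = Nmat g P P' c U V := by
    ext j i
    have hjc : j.castSucc ≠ Fin.last g := by
      simp [Fin.ext_iff]
      omega
    have hrow : ∀ b : Fin (g + 1), M2' j.castSucc b = M j.castSucc.castSucc b.succ
        - V * M j.castSucc.castSucc b.castSucc := by
      intro b
      rw [hM2', Matrix.updateRow_ne hjc, hM2]
      simp
    have hMrow : ∀ b : Fin (g + 2), M j.castSucc.castSucc b = srow g P P' c j b := by
      intro b
      have hcc : j.castSucc.castSucc = (⟨(j : ℕ), by omega⟩ : Fin (g + 2)) := rfl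
      rw [hcc, hM]
      have := Bd_row_s (srow g P P' c) (fun i : Fin (g+2) => U ^ (i : ℕ))
        (fun i : Fin (g+2) => V ^ (i : ℕ)) j
      exact congrFun this b
    simp only [Matrix.of_apply, hrow, hMrow]
    simp only [srow, Nmat, Matrix.of_apply, Fin.val_succ, Fin.coe_castSucc]
    ring
  have hBd : Bd (srow g P P' c) (fun i => U ^ (i : ℕ)) (fun i => V ^ (i : ℕ)) = M.det := rfl
  have hsign : ((-1 : ℂ)) ^ (g + 1) * ((U - V) * ((-1 : ℂ) ^ g * (Nmat g P P' c U V).det))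
      = (V - U) * (Nmat g P P' c U V).det := by
    rw [pow_succ]
    have : ((-1 : ℂ)) ^ g * (-1) * ((U - V) * ((-1 : ℂ) ^ g * (Nmat g P P' c U V).det))
        = ((-1 : ℂ) ^ g * (-1 : ℂ) ^ g) * ((V - U) * (Nmat g P P' c U V).det) := by ring
    rw [this, ← mul_pow]
    norm_num
  rw [hBd, step1, step2, step3, hfinal, hsign]
end chain

noncomputable def Hc (g : ℕ) (P P' c : Fin g → ℂ) (U V : ℂ) : ℂ :=
  Hfun g P P' (fun j => c j * ((P' j - U) * (P' j - V)) / ((P j - U) * (P j - V)))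


lemma fay (g : ℕ) (P P' : Fin g → ℂ) (hP : Function.Injective P) (c : Fin g → ℂ)
    (A B C D : ℂ) (hA : ∀ j, P j ≠ A) (hB : ∀ j, P j ≠ B) (hC : ∀ j, P j ≠ C)
    (hD : ∀ j, P j ≠ D) :
    (D - C) * (B - A) * Hc g P P' c C D * Hc g P P' c A B
      - (D - B) * (C - A) * Hc g P P' c B D * Hc g P P' c A C
      + (C - B) * (D - A) * Hc g P P' c B C * Hc g P P' c A D = 0 := by
  classical
  set Vd : ℂ := ∏ p ∈ Finset.univ.filter (fun p : Fin g × Fin g => p.2 < p.1), (P p.1 - P p.2)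
    with hVd
  have hVdne : Vd ≠ 0 := by
    rw [hVd]
    apply Finset.prod_ne_zero_iff.mpr
    intro p hp
    rw [Finset.mem_filter] at hp
    have : p.2 ≠ p.1 := ne_of_lt hp.2
    exact sub_ne_zero.mpr fun hc => this (hP hc.symm)
  have hQ : ∀ (W : ℂ), (∀ j, P j ≠ W) → (∏ j, (P j - W)) ≠ 0 := by
    intro W hW
    exact Finset.prod_ne_zero_iff.mpr fun j _ => sub_ne_zero.mpr (hW j)
  have hNH : ∀ (U V : ℂ), (∀ j, P j ≠ U) → (∀ j, P j ≠ V) →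
      (Nmat g P P' c U V).det
        = (∏ j, (P j - U)) * (∏ j, (P j - V)) * Vd * Hc g P P' c U V := by
    intro U V hU hV
    have htr : (Nmat g P P' c U V).det = Matrix.det (Matrix.of fun (i j : Fin g) =>
        ((P j - U) * (P j - V)) *
          ((Matrix.of fun (i j : Fin g) => P j ^ (i : ℕ)
            - (c j * ((P' j - U) * (P' j - V)) / ((P j - U) * (P j - V))) * P' j ^ (i : ℕ)) i j))
        := by
      rw [← Matrix.det_transpose (Nmat g P P' c U V)]
      congr 1
      ext i j
      have h1 : P j - U ≠ 0 := sub_ne_zero.mpr (hU j)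
      have h2 : P j - V ≠ 0 := sub_ne_zero.mpr (hV j)
      simp only [Matrix.transpose_apply, Nmat, Matrix.of_apply]
      field_simp
    rw [htr, Matrix.det_mul_row]
    rw [Finset.prod_mul_distrib]
    rw [Hc, Hfun, ← hVd]
    field_simp
  have plk := pluecker (srow g P P' c) (fun i => A ^ (i : ℕ)) (fun i => B ^ (i : ℕ))
    (fun i => C ^ (i : ℕ)) (fun i => D ^ (i : ℕ))
  rw [Bd_vdm g P P' c C D, Bd_vdm g P P' c A B, Bd_vdm g P P' c B D, Bd_vdm g P P' c A C,
    Bd_vdm g P P' c B C, Bd_vdm g P P' c A D] at plk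
  rw [hNH C D hC hD, hNH A B hA hB, hNH B D hB hD, hNH A C hA hC, hNH B C hB hC,
    hNH A D hA hD] at plk
  have key : ((∏ j, (P j - A)) * (∏ j, (P j - B)) * (∏ j, (P j - C)) * (∏ j, (P j - D))
      * Vd ^ 2) *
      ((D - C) * (B - A) * Hc g P P' c C D * Hc g P P' c A B
        - (D - B) * (C - A) * Hc g P P' c B D * Hc g P P' c A C
        + (C - B) * (D - A) * Hc g P P' c B C * Hc g P P' c A D) = 0 := by
    linear_combination plk
  rcases mul_eq_zero.mp key with h | h
  · exact absurd h (by
      simp only [mul_ne_zero_iff]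
      exact ⟨⟨⟨⟨hQ A hA, hQ B hB⟩, hQ C hC⟩, hQ D hD⟩, pow_ne_zero 2 hVdne⟩)
  · exact h


/-- The rational double-Fay identity (the six-point Fay-type identity underlying
the Hirota equations). Here `σⱼ(𝒴) = σⱼ(Y',Y)` and `σⱼ(𝒵) = σⱼ(Z',Z)`. -/
theorem rational_double_fay (g : ℕ) (hg : 1 ≤ g) (P P' : Fin g → ℂ)
    (hP : Function.Injective P)
    (X Y Y' Z Z' : ℂ)
    (hPpts : ∀ j, P j ≠ X ∧ P j ≠ Y ∧ P j ≠ Y' ∧ P j ≠ Z ∧ P j ≠ Z')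
    (hP'pts : ∀ j, P' j ≠ X ∧ P' j ≠ Y ∧ P' j ≠ Y' ∧ P' j ≠ Z ∧ P' j ≠ Z')
    (f : Fin g → ℂ) :
    (X - Y) * (Y' - Z') * (Z - X) *
          Hfun g P P' (fun j =>
            phiFn (P j) (P' j) (f j) X * sigmaFn (P j) (P' j) Y' Y *
              sigmaFn (P j) (P' j) Z' Z) *
          Hfun g P P' (fun j => phiFn (P j) (P' j) (f j) Y) *
          Hfun g P P' (fun j => phiFn (P j) (P' j) (f j) Z) +
        (X - Y') * (Y - Z) * (Z' - X) *
          Hfun g P P' (fun j => phiFn (P j) (P' j) (f j) X) *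
          Hfun g P P' (fun j =>
            phiFn (P j) (P' j) (f j) Y * sigmaFn (P j) (P' j) Z' Z) *
          Hfun g P P' (fun j =>
            phiFn (P j) (P' j) (f j) Z * sigmaFn (P j) (P' j) Y' Y) =
      (X - Y) * (Y' - Z) * (Z' - X) *
          Hfun g P P' (fun j =>
            phiFn (P j) (P' j) (f j) X * sigmaFn (P j) (P' j) Y' Y) *
          Hfun g P P' (fun j =>
            phiFn (P j) (P' j) (f j) Y * sigmaFn (P j) (P' j) Z' Z) *
          Hfun g P P' (fun j => phiFn (P j) (P' j) (f j) Z) +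
        (X - Y') * (Y - Z') * (Z - X) *
          Hfun g P P' (fun j =>
            phiFn (P j) (P' j) (f j) Z * sigmaFn (P j) (P' j) Y' Y) *
          Hfun g P P' (fun j => phiFn (P j) (P' j) (f j) Y) *
          Hfun g P P' (fun j => phiFn (P j) (P' j) (f j) X * sigmaFn (P j) (P' j) Z' Z) := by

  classical
  set e : Fin g → ℂ := fun j => f j * ((P j - X) / (P' j - X)) * ((P j - Y) / (P' j - Y))
    * ((P j - Z) / (P' j - Z)) with he
  have hpX : ∀ j, P j ≠ X := fun j => (hPpts j).1
  have hpY : ∀ j, P j ≠ Y := fun j => (hPpts j).2.1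
  have hpY' : ∀ j, P j ≠ Y' := fun j => (hPpts j).2.2.1
  have hpZ : ∀ j, P j ≠ Z := fun j => (hPpts j).2.2.2.1
  have hpZ' : ∀ j, P j ≠ Z' := fun j => (hPpts j).2.2.2.2
  have key : ∀ (F : Fin g → ℂ) (U V : ℂ),
      (∀ j, F j = e j * ((P' j - U) * (P' j - V)) / ((P j - U) * (P j - V))) →
      Hfun g P P' F = Hc g P P' e U V := by
    intro F U V hFU
    rw [Hc]
    congr 1
    funext j
    exact hFU j
  have nz : ∀ j : Fin g, (P' j - X ≠ 0) ∧ (P' j - Y ≠ 0) ∧ (P' j - Y' ≠ 0) ∧ (P' j - Z ≠ 0)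
      ∧ (P' j - Z' ≠ 0) ∧ (P j - X ≠ 0) ∧ (P j - Y ≠ 0) ∧ (P j - Y' ≠ 0) ∧ (P j - Z ≠ 0)
      ∧ (P j - Z' ≠ 0) := by
    intro j
    obtain ⟨h1, h2, h3, h4, h5⟩ := hP'pts j
    refine ⟨sub_ne_zero.mpr h1, sub_ne_zero.mpr h2, sub_ne_zero.mpr h3, sub_ne_zero.mpr h4,
      sub_ne_zero.mpr h5, sub_ne_zero.mpr (hpX j), sub_ne_zero.mpr (hpY j),
      sub_ne_zero.mpr (hpY' j), sub_ne_zero.mpr (hpZ j), sub_ne_zero.mpr (hpZ' j)⟩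
  have hH1 : Hfun g P P' (fun j => phiFn (P j) (P' j) (f j) X * sigmaFn (P j) (P' j) Y' Y *
      sigmaFn (P j) (P' j) Z' Z) = Hc g P P' e Y' Z' := by
    apply key
    intro j
    obtain ⟨a1, a2, a3, a4, a5, b1, b2, b3, b4, b5⟩ := nz j
    simp only [phiFn, sigmaFn, he]
    field_simp
  have hH2 : Hfun g P P' (fun j => phiFn (P j) (P' j) (f j) Y) = Hc g P P' e X Z := by
    apply key
    intro j
    obtain ⟨a1, a2, a3, a4, a5, b1, b2, b3, b4, b5⟩ := nz j
    simp only [phiFn, sigmaFn, he]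
    field_simp
  have hH3 : Hfun g P P' (fun j => phiFn (P j) (P' j) (f j) Z) = Hc g P P' e X Y := by
    apply key
    intro j
    obtain ⟨a1, a2, a3, a4, a5, b1, b2, b3, b4, b5⟩ := nz j
    simp only [phiFn, sigmaFn, he]
    field_simp
  have hH4 : Hfun g P P' (fun j => phiFn (P j) (P' j) (f j) X) = Hc g P P' e Z Y := by
    apply key
    intro j
    obtain ⟨a1, a2, a3, a4, a5, b1, b2, b3, b4, b5⟩ := nz j
    simp only [phiFn, sigmaFn, he]
    field_simp
  have hH5 : Hfun g P P' (fun j => phiFn (P j) (P' j) (f j) Y * sigmaFn (P j) (P' j) Z' Z)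
      = Hc g P P' e X Z' := by
    apply key
    intro j
    obtain ⟨a1, a2, a3, a4, a5, b1, b2, b3, b4, b5⟩ := nz j
    simp only [phiFn, sigmaFn, he]
    field_simp
  have hH6 : Hfun g P P' (fun j => phiFn (P j) (P' j) (f j) Z * sigmaFn (P j) (P' j) Y' Y)
      = Hc g P P' e X Y' := by
    apply key
    intro j
    obtain ⟨a1, a2, a3, a4, a5, b1, b2, b3, b4, b5⟩ := nz j
    simp only [phiFn, sigmaFn, he]
    field_simp
  have hH7 : Hfun g P P' (fun j => phiFn (P j) (P' j) (f j) X * sigmaFn (P j) (P' j) Y' Y)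
      = Hc g P P' e Z Y' := by
    apply key
    intro j
    obtain ⟨a1, a2, a3, a4, a5, b1, b2, b3, b4, b5⟩ := nz j
    simp only [phiFn, sigmaFn, he]
    field_simp
  have hH8 : Hfun g P P' (fun j => phiFn (P j) (P' j) (f j) X * sigmaFn (P j) (P' j) Z' Z)
      = Hc g P P' e Y Z' := by
    apply key
    intro j
    obtain ⟨a1, a2, a3, a4, a5, b1, b2, b3, b4, b5⟩ := nz j
    simp only [phiFn, sigmaFn, he]
    field_simp
  rw [hH1, hH2, hH3, hH4, hH5, hH6, hH7, hH8]
  have fay1 := fay g P P' hP e X Z Y' Z' hpX hpZ hpY' hpZ'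
  have fay2 := fay g P P' hP e X Z Y Z' hpX hpZ hpY hpZ'
  linear_combination (-((X - Y) * Hc g P P' e X Y)) * fay1
    + ((X - Y') * Hc g P P' e X Y') * fay2
end

section
/- Parametrization solves the trivial functional fixed-point equations: let X', X, Y', Y, Z₀', Z₀ be six pairwise distinct complex numbers, ε = (−1)^N, and set U₁ = −ε(Y−Z₀')/(Y−Z₀), U₂ = −ε(X−Z₀')/(X−Z₀), U₃ = −ε(X−Y')/(X−Y), W₁ = ε(Y'−Z₀)/(Y−Z₀), W₂ = ε(X'−Z₀)/(X−Z₀), W₃ = ε(X'−Y)/(X−Y), K₁ = −[Y',Y;Z₀',Z₀], K₂ = −[X',X;Z₀',Z₀], K₃ = −[X',X;Y',Y]. Then these satisfy the fixed-point equations of the functional map: (K₂U₂−K₁U₁)W₂ = (K₁U₁+U₂)K₃W₃, (W₁−K₃U₃)W₃ = (W₁+U₃)W₂, and (U₁−U₂)U₃ = (K₁U₁+U₂)W₁. -/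
section CrossRatio

variable {A B C D : ℂ}

lemma crossRatio_mul_div_eq_div_left (hBC : B ≠ C) (hBD : B ≠ D) :
    crossRatio A B C D * ((B - C) / (B - D)) = (A - C) / (A - D) := by
  unfold crossRatio; field_simp

lemma crossRatio_mul_div_eq_div_right (hAD : A ≠ D) (hBD : B ≠ D) :
    crossRatio A B C D * ((A - D) / (B - D)) = (A - C) / (B - C) := by
  unfold crossRatio; field_simp

end CrossRatio

theorem crossRatio_solves_fixed_point_general (X' X Y' Y Z₀' Z₀ : ℂ)
    (h₃ : X' ≠ Y) (h₅ : X' ≠ Z₀)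
    (h₆ : X ≠ Y') (h₇ : X ≠ Y) (h₈ : X ≠ Z₀') (h₉ : X ≠ Z₀)
    (h₁₂ : Y' ≠ Z₀)
    (h₁₃ : Y ≠ Z₀') (h₁₄ : Y ≠ Z₀)
    (ε : ℂ)
    (U₁ U₂ U₃ W₁ W₂ W₃ K₁ K₂ K₃ : ℂ)
    (hU₁ : U₁ = -ε * ((Y - Z₀') / (Y - Z₀)))
    (hU₂ : U₂ = -ε * ((X - Z₀') / (X - Z₀)))
    (hU₃ : U₃ = -ε * ((X - Y') / (X - Y)))
    (hW₁ : W₁ = ε * ((Y' - Z₀) / (Y - Z₀)))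
    (hW₂ : W₂ = ε * ((X' - Z₀) / (X - Z₀)))
    (hW₃ : W₃ = ε * ((X' - Y) / (X - Y)))
    (hK₁ : K₁ = -crossRatio Y' Y Z₀' Z₀)
    (hK₂ : K₂ = -crossRatio X' X Z₀' Z₀)
    (hK₃ : K₃ = -crossRatio X' X Y' Y) :
    (K₂ * U₂ - K₁ * U₁) * W₂ = (K₁ * U₁ + U₂) * K₃ * W₃ ∧
      (W₁ - K₃ * U₃) * W₃ = (W₁ + U₃) * W₂ ∧
      (U₁ - U₂) * U₃ = (K₁ * U₁ + U₂) * W₁ := by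
  have hKU₁ : K₁ * U₁ = ε * ((Y' - Z₀') / (Y' - Z₀)) := by
    rw [hK₁, hU₁]
    linear_combination ε * crossRatio_mul_div_eq_div_left (A := Y') h₁₃ h₁₄
  have hKU₂ : K₂ * U₂ = ε * ((X' - Z₀') / (X' - Z₀)) := by
    rw [hK₂, hU₂]
    linear_combination ε * crossRatio_mul_div_eq_div_left (A := X') h₈ h₉
  have hKU₃ : K₃ * U₃ = ε * ((X' - Y') / (X' - Y)) := by
    rw [hK₃, hU₃]
    linear_combination ε * crossRatio_mul_div_eq_div_left (A := X') h₆ h₇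
  have hKW₃ : K₃ * W₃ = -ε * ((X' - Y') / (X - Y')) := by
    rw [hK₃, hW₃]
    linear_combination -ε * crossRatio_mul_div_eq_div_right (C := Y') h₃ h₇
  refine ⟨?_, ?_, ?_⟩
  · rw [mul_assoc _ K₃, hKW₃, hKU₁, hKU₂, hU₂, hW₂]
    field_simp
    ring
  · rw [hKU₃, hW₁, hU₃, hW₂, hW₃]
    field_simp
    ring
  · rw [hKU₁, hU₁, hU₂, hU₃, hW₁]
    field_simp
    ring

/-- The cross-ratio parametrization solves the fixed-point equations of the
functional map `R^{(f)}` (trivial classical dynamics). -/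
theorem crossRatio_solves_fixed_point (N : ℕ) (X' X Y' Y Z₀' Z₀ : ℂ)
    (h₁ : X' ≠ X) (h₂ : X' ≠ Y') (h₃ : X' ≠ Y) (h₄ : X' ≠ Z₀') (h₅ : X' ≠ Z₀)
    (h₆ : X ≠ Y') (h₇ : X ≠ Y) (h₈ : X ≠ Z₀') (h₉ : X ≠ Z₀)
    (h₁₀ : Y' ≠ Y) (h₁₁ : Y' ≠ Z₀') (h₁₂ : Y' ≠ Z₀)
    (h₁₃ : Y ≠ Z₀') (h₁₄ : Y ≠ Z₀) (h₁₅ : Z₀' ≠ Z₀)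
    (ε : ℂ) (hε : ε = (-1 : ℂ) ^ N)
    (U₁ U₂ U₃ W₁ W₂ W₃ K₁ K₂ K₃ : ℂ)
    (hU₁ : U₁ = -ε * ((Y - Z₀') / (Y - Z₀)))
    (hU₂ : U₂ = -ε * ((X - Z₀') / (X - Z₀)))
    (hU₃ : U₃ = -ε * ((X - Y') / (X - Y)))
    (hW₁ : W₁ = ε * ((Y' - Z₀) / (Y - Z₀)))
    (hW₂ : W₂ = ε * ((X' - Z₀) / (X - Z₀)))
    (hW₃ : W₃ = ε * ((X' - Y) / (X - Y)))
    (hK₁ : K₁ = -crossRatio Y' Y Z₀' Z₀)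
    (hK₂ : K₂ = -crossRatio X' X Z₀' Z₀)
    (hK₃ : K₃ = -crossRatio X' X Y' Y) :
    (K₂ * U₂ - K₁ * U₁) * W₂ = (K₁ * U₁ + U₂) * K₃ * W₃ ∧
      (W₁ - K₃ * U₃) * W₃ = (W₁ + U₃) * W₂ ∧
      (U₁ - U₂) * U₃ = (K₁ * U₁ + U₂) * W₁ :=
  crossRatio_solves_fixed_point_general X' X Y' Y Z₀' Z₀ h₃ h₅ h₆ h₇ h₈ h₉ h₁₂ h₁₃ h₁₄ ε U₁ U₂ U₃ W₁
    W₂ W₃ K₁ K₂ K₃ hU₁ hU₂ hU₃ hW₁ hW₂ hW₃ hK₁ hK₂ hK₃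
end
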